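/- Let H be a finite-dimensional complex Hilbert space and let A_x = |φ_x⟩⟨φ_x| (x ∈ Ω_A) and B_y = |ψ_y⟩⟨ψ_y| (y ∈ Ω_B) be atomic observables on H, where the φ_x and ψ_y are unit vectors and ∑_x A_x = 1 = ∑_y B_y. For each state ρ set λ_{xy}(ρ) = |⟨φ_x, ψ_y⟩|² ⟨φ_x, ρ φ_x⟩. Then λ_{xy}(ρ) ∈ [0,1], ∑_{x,y} λ_{xy}(ρ) = 1, and for all (x,y): (A_x ∘ B_y)^{1/2} ρ (A_x ∘ B_y)^{1/2} = λ_{xy}(ρ) A_x and B_y A_x ρ A_x B_y = λ_{xy}(ρ) B_y. -/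

import Mathlib

/-!
Everything reduces to the rank-one identity `|u⟩⟨v| M |w⟩⟨z| = ⟨v, M w⟩ |u⟩⟨z|`.
Since a unit-vector projection `A_x` is its own square root, `A_x ∘ B_y = |⟨φ_x, ψ_y⟩|² A_x`,
and by uniqueness of positive square roots `(A_x ∘ B_y)^{1/2} = |⟨φ_x, ψ_y⟩| A_x`; both
instruments then collapse to multiples of a projection. The weights `λ_{xy}` sum to one by
Parseval for the resolution `∑_y B_y = 1` followed by `∑_x ⟨φ_x, ρ φ_x⟩ = tr ρ`.
-/

open Matrix ComplexOrder

/-- The square root of a positive semidefinite matrix, as `Matrix.PosSemidef.sqrt` was defined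
in the older Mathlib (it has since been removed). -/
noncomputable def Matrix.PosSemidef.sqrt {n : Type*} [Fintype n] [DecidableEq n]
    {𝕜 : Type*} [RCLike 𝕜] {A : Matrix n n 𝕜} (hA : A.PosSemidef) : Matrix n n 𝕜 :=
  hA.1.eigenvectorUnitary.1 * diagonal ((↑) ∘ (√·) ∘ hA.1.eigenvalues) *
    (star hA.1.eigenvectorUnitary : Matrix n n 𝕜)

theorem Matrix.PosSemidef.sqrt_conjTranspose {n : Type*} [Fintype n] [DecidableEq n]
    {𝕜 : Type*} [RCLike 𝕜] {A : Matrix n n 𝕜} (hA : A.PosSemidef) : hA.sqrtᴴ = hA.sqrt := by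
  unfold Matrix.PosSemidef.sqrt
  rw [conjTranspose_mul, conjTranspose_mul, diagonal_conjTranspose]
  simp only [Matrix.star_eq_conjTranspose, conjTranspose_conjTranspose, Matrix.mul_assoc]
  congr 3
  funext i
  simp

/-- The sequential product `a ∘ b = a^{1/2} b a^{1/2}` of effects, where `a^{1/2}` is the
unique positive semidefinite square root of `a`. -/
noncomputable def seqProd {n : Type*} [Fintype n] [DecidableEq n]
    {a : Matrix n n ℂ} (ha : a.PosSemidef) (b : Matrix n n ℂ) : Matrix n n ℂ :=
  ha.sqrt * b * ha.sqrt

theorem seqProd_posSemidef {n : Type*} [Fintype n] [DecidableEq n]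
    {a : Matrix n n ℂ} (ha : a.PosSemidef) {b : Matrix n n ℂ} (hb : b.PosSemidef) :
    (seqProd ha b).PosSemidef := by
  have h := hb.mul_mul_conjTranspose_same ha.sqrt
  rwa [ha.sqrt_conjTranspose] at h

theorem vecMulVec_star_self_posSemidef {n : Type*} [Fintype n] (v : n → ℂ) :
    (Matrix.vecMulVec v (star v)).PosSemidef := by
  rw [Matrix.vecMulVec_eq Unit]
  have h : Matrix.replicateRow Unit (star v) = (Matrix.replicateCol Unit v)ᴴ := by
    ext i j
    simp [Matrix.replicateRow, Matrix.replicateCol]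
  rw [h]
  exact Matrix.posSemidef_self_mul_conjTranspose _

namespace Matrix

variable {n : Type*} [Fintype n]

theorem vecMulVec_mul_mul_vecMulVec {R : Type*} [CommSemiring R] (u v w z : n → R)
    (M : Matrix n n R) :
    vecMulVec u v * M * vecMulVec w z = (v ⬝ᵥ M *ᵥ w) • vecMulVec u z := by
  rw [vecMulVec_mul, vecMulVec_mul_vecMulVec, vecMulVec_smul, dotProduct_mulVec]

theorem vecMulVec_star_self_mul_self {R : Type*} [Semiring R] [Star R] {v : n → R}
    (hv : star v ⬝ᵥ v = 1) :
    vecMulVec v (star v) * vecMulVec v (star v) = vecMulVec v (star v) := by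
  rw [vecMulVec_mul_vecMulVec, hv, one_smul]

theorem sum_star_dotProduct_mulVec_eq_trace {R ι : Type*} [CommSemiring R] [StarRing R]
    [Fintype ι] [DecidableEq n] {v : ι → n → R} (hv : ∑ i, vecMulVec (v i) (star (v i)) = 1)
    (M : Matrix n n R) : ∑ i, star (v i) ⬝ᵥ M *ᵥ v i = M.trace := by
  have h : ∀ i, star (v i) ⬝ᵥ M *ᵥ v i = (M * vecMulVec (v i) (star (v i))).trace := by
    intro i
    rw [mul_vecMulVec, trace_vecMulVec, dotProduct_comm]
  simp_rw [h, ← trace_sum, ← Finset.mul_sum, hv, Matrix.mul_one]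

theorem PosSemidef.sqrt_eq_of_mul_self_eq [DecidableEq n] {𝕜 : Type*} [RCLike 𝕜]
    {A B : Matrix n n 𝕜} (hA : A.PosSemidef) (hB : B.PosSemidef) (h : B * B = A) : hA.sqrt = B := by
  have hsqrt : hA.sqrt = cfc Real.sqrt A := by
    rw [hA.1.cfc_eq, IsHermitian.cfc, Unitary.conjStarAlgAut_apply]
    rfl
  have hB' := hB.1.isSelfAdjoint
  have hsq : A = cfc (fun x : ℝ => x ^ 2) B := by
    rw [cfc_pow_id B 2 hB', ← h, sq]
  rw [hsqrt, hsq, ← cfc_comp Real.sqrt (fun x : ℝ => x ^ 2) B hB']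
  conv_rhs => rw [← cfc_id ℝ B hB']
  refine cfc_congr fun x hx => Real.sqrt_sq ?_
  rw [hB.1.spectrum_real_eq_range_eigenvalues] at hx
  obtain ⟨i, rfl⟩ := hx
  exact hB.eigenvalues_nonneg i

theorem norm_star_dotProduct_comm (u v : n → ℂ) : ‖star v ⬝ᵥ u‖ = ‖star u ⬝ᵥ v‖ := by
  rw [star_dotProduct, norm_star]

theorem star_dotProduct_vecMulVec_star_self_mulVec (u v : n → ℂ) :
    star v ⬝ᵥ vecMulVec u (star u) *ᵥ v = ((‖star u ⬝ᵥ v‖ ^ 2 : ℝ) : ℂ) := by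
  rw [vecMulVec_mulVec, dotProduct_smul, MulOpposite.smul_eq_mul_unop, MulOpposite.unop_op,
    star_dotProduct v u, Complex.ofReal_pow]
  exact Complex.conj_mul' _

theorem sum_norm_star_dotProduct_sq {ι : Type*} [Fintype ι] [DecidableEq n] {v : ι → n → ℂ}
    (hv : ∑ i, vecMulVec (v i) (star (v i)) = 1) (u : n → ℂ) :
    ∑ i, ((‖star u ⬝ᵥ v i‖ ^ 2 : ℝ) : ℂ) = star u ⬝ᵥ u := by
  simp_rw [← star_dotProduct_vecMulVec_star_self_mulVec, sum_star_dotProduct_mulVec_eq_trace hv,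
    trace_vecMulVec, dotProduct_comm]

theorem vecMulVec_star_self_conj_vecMulVec_star_self_conj (u v : n → ℂ) (ρ : Matrix n n ℂ) :
    vecMulVec v (star v) * vecMulVec u (star u) * ρ * vecMulVec u (star u) * vecMulVec v (star v)
      = ((‖star u ⬝ᵥ v‖ ^ 2 : ℝ) * (star u ⬝ᵥ ρ *ᵥ u)) • vecMulVec v (star v) := by
  set P := vecMulVec u (star u)
  have hconj : P * ρ * P = (star u ⬝ᵥ ρ *ᵥ u) • P := vecMulVec_mul_mul_vecMulVec _ _ _ _ _
  calc vecMulVec v (star v) * P * ρ * P * vecMulVec v (star v)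
      = vecMulVec v (star v) * (P * ρ * P) * vecMulVec v (star v) := by
        simp only [Matrix.mul_assoc]
    _ = _ := by
      rw [hconj, Matrix.mul_smul, Matrix.smul_mul, vecMulVec_mul_mul_vecMulVec,
        star_dotProduct_vecMulVec_star_self_mulVec, smul_smul, mul_comm]

end Matrix

section RankOneProjection

variable {n : Type*} [Fintype n] [DecidableEq n]

theorem sqrt_vecMulVec_star_self {v : n → ℂ} (hv : star v ⬝ᵥ v = 1) :
    (vecMulVec_star_self_posSemidef v).sqrt = vecMulVec v (star v) :=
  PosSemidef.sqrt_eq_of_mul_self_eq _ (vecMulVec_star_self_posSemidef v)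
    (vecMulVec_star_self_mul_self hv)

theorem seqProd_vecMulVec_star_self {u : n → ℂ} (hu : star u ⬝ᵥ u = 1) (v : n → ℂ) :
    seqProd (vecMulVec_star_self_posSemidef u) (vecMulVec v (star v))
      = ((‖star u ⬝ᵥ v‖ ^ 2 : ℝ) : ℂ) • vecMulVec u (star u) := by
  rw [seqProd, sqrt_vecMulVec_star_self hu, vecMulVec_mul_mul_vecMulVec,
    star_dotProduct_vecMulVec_star_self_mulVec, norm_star_dotProduct_comm]

theorem sqrt_seqProd_vecMulVec_star_self {u : n → ℂ} (hu : star u ⬝ᵥ u = 1) (v : n → ℂ) :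
    (seqProd_posSemidef (vecMulVec_star_self_posSemidef u)
        (vecMulVec_star_self_posSemidef v)).sqrt
      = ((‖star u ⬝ᵥ v‖ : ℝ) : ℂ) • vecMulVec u (star u) := by
  refine PosSemidef.sqrt_eq_of_mul_self_eq _
    ((vecMulVec_star_self_posSemidef u).smul (by positivity)) ?_
  rw [seqProd_vecMulVec_star_self hu, smul_mul_smul, vecMulVec_star_self_mul_self hu]
  congr 1
  push_cast
  ring

theorem sqrt_seqProd_mul_mul_sqrt_seqProd {u : n → ℂ} (hu : star u ⬝ᵥ u = 1) (v : n → ℂ)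
    (ρ : Matrix n n ℂ) :
    (seqProd_posSemidef (vecMulVec_star_self_posSemidef u)
        (vecMulVec_star_self_posSemidef v)).sqrt * ρ *
      (seqProd_posSemidef (vecMulVec_star_self_posSemidef u)
        (vecMulVec_star_self_posSemidef v)).sqrt
      = ((‖star u ⬝ᵥ v‖ ^ 2 : ℝ) * (star u ⬝ᵥ ρ *ᵥ u)) • vecMulVec u (star u) := by
  simp only [sqrt_seqProd_vecMulVec_star_self hu, Matrix.smul_mul, Matrix.mul_smul, smul_smul,
    vecMulVec_mul_mul_vecMulVec]
  congr 1
  push_cast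
  ring

end RankOneProjection

theorem stmt_6_general {n : Type*} [Fintype n] [DecidableEq n]
    {ΩA ΩB : Type*} [Fintype ΩA] [Fintype ΩB]
    (φ : ΩA → n → ℂ) (ψ : ΩB → n → ℂ)
    (hφ : ∀ x, star (φ x) ⬝ᵥ φ x = 1)
    (hAsum : ∑ x, Matrix.vecMulVec (φ x) (star (φ x)) = 1)
    (hBsum : ∑ y, Matrix.vecMulVec (ψ y) (star (ψ y)) = 1)
    (ρ : Matrix n n ℂ) (hρ : ρ.PosSemidef) (hρtr : ρ.trace = 1)
    (lam : ΩA → ΩB → ℂ)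
    (hlam : ∀ x y, lam x y
      = (↑(‖star (φ x) ⬝ᵥ ψ y‖ ^ 2) : ℂ) * (star (φ x) ⬝ᵥ (ρ *ᵥ φ x))) :
    (∀ x y, 0 ≤ (lam x y).re ∧ (lam x y).re ≤ 1 ∧ (lam x y).im = 0) ∧
    (∑ x, ∑ y, lam x y = 1) ∧
    (∀ x y,
      (seqProd_posSemidef (vecMulVec_star_self_posSemidef (φ x))
          (vecMulVec_star_self_posSemidef (ψ y))).sqrt * ρ *
        (seqProd_posSemidef (vecMulVec_star_self_posSemidef (φ x))
          (vecMulVec_star_self_posSemidef (ψ y))).sqrt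
      = lam x y • Matrix.vecMulVec (φ x) (star (φ x))) ∧
    (∀ x y,
      Matrix.vecMulVec (ψ y) (star (ψ y)) * Matrix.vecMulVec (φ x) (star (φ x)) * ρ *
        Matrix.vecMulVec (φ x) (star (φ x)) * Matrix.vecMulVec (ψ y) (star (ψ y))
      = lam x y • Matrix.vecMulVec (ψ y) (star (ψ y))) := by
  have hrow (x : ΩA) : ∑ y, lam x y = star (φ x) ⬝ᵥ ρ *ᵥ φ x := by
    simp_rw [hlam, ← Finset.sum_mul, sum_norm_star_dotProduct_sq hBsum, hφ, one_mul]
  have hsum : ∑ x, ∑ y, lam x y = 1 := by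
    simp_rw [hrow, sum_star_dotProduct_mulVec_eq_trace hAsum, hρtr]
  have hnonneg (x : ΩA) (y : ΩB) : 0 ≤ lam x y :=
    hlam x y ▸ mul_nonneg (by positivity) (hρ.dotProduct_mulVec_nonneg _)
  refine ⟨fun x y => ?_, hsum, fun x y => ?_, fun x y => ?_⟩
  · have hle : lam x y ≤ 1 := calc
      lam x y ≤ ∑ y', lam x y' :=
        Finset.single_le_sum (fun y' _ => hnonneg x y') (Finset.mem_univ _)
      _ ≤ ∑ x', ∑ y', lam x' y' :=
        Finset.single_le_sum (f := fun x' => ∑ y', lam x' y')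
          (fun x' _ => Finset.sum_nonneg fun y' _ => hnonneg x' y') (Finset.mem_univ _)
      _ = 1 := hsum
    obtain ⟨hre, him⟩ := Complex.nonneg_iff.1 (hnonneg x y)
    exact ⟨hre, by simpa using (Complex.le_def.1 hle).1, him.symm⟩
  · rw [hlam, sqrt_seqProd_mul_mul_sqrt_seqProd (hφ x)]
  · rw [hlam, vecMulVec_star_self_conj_vecMulVec_star_self_conj]

/-- For atomic observables `A_x = |φ_x⟩⟨φ_x|`, `B_y = |ψ_y⟩⟨ψ_y|` and a state
`ρ`, with `λ_{xy}(ρ) = |⟨φ_x, ψ_y⟩|² ⟨φ_x, ρ φ_x⟩`, one has `λ_{xy}(ρ) ∈ [0,1]`,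
`∑_{x,y} λ_{xy}(ρ) = 1`, `L^{A∘B}_{(x,y)}(ρ) = λ_{xy}(ρ) A_x` and
`(L^A ∘ L^B)_{(x,y)}(ρ) = λ_{xy}(ρ) B_y`. -/
theorem stmt_6 {n : Type*} [Fintype n] [DecidableEq n]
    {ΩA ΩB : Type*} [Fintype ΩA] [Fintype ΩB]
    (φ : ΩA → n → ℂ) (ψ : ΩB → n → ℂ)
    (hφ : ∀ x, star (φ x) ⬝ᵥ φ x = 1) (hψ : ∀ y, star (ψ y) ⬝ᵥ ψ y = 1)
    (hAsum : ∑ x, Matrix.vecMulVec (φ x) (star (φ x)) = 1)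
    (hBsum : ∑ y, Matrix.vecMulVec (ψ y) (star (ψ y)) = 1)
    (ρ : Matrix n n ℂ) (hρ : ρ.PosSemidef) (hρtr : ρ.trace = 1)
    (lam : ΩA → ΩB → ℂ)
    (hlam : ∀ x y, lam x y
      = (↑(‖star (φ x) ⬝ᵥ ψ y‖ ^ 2) : ℂ) * (star (φ x) ⬝ᵥ (ρ *ᵥ φ x))) :
    (∀ x y, 0 ≤ (lam x y).re ∧ (lam x y).re ≤ 1 ∧ (lam x y).im = 0) ∧
    (∑ x, ∑ y, lam x y = 1) ∧
    (∀ x y,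
      (seqProd_posSemidef (vecMulVec_star_self_posSemidef (φ x))
          (vecMulVec_star_self_posSemidef (ψ y))).sqrt * ρ *
        (seqProd_posSemidef (vecMulVec_star_self_posSemidef (φ x))
          (vecMulVec_star_self_posSemidef (ψ y))).sqrt
      = lam x y • Matrix.vecMulVec (φ x) (star (φ x))) ∧
    (∀ x y,
      Matrix.vecMulVec (ψ y) (star (ψ y)) * Matrix.vecMulVec (φ x) (star (φ x)) * ρ *
        Matrix.vecMulVec (φ x) (star (φ x)) * Matrix.vecMulVec (ψ y) (star (ψ y))
      = lam x y • Matrix.vecMulVec (ψ y) (star (ψ y))) :=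
  stmt_6_general φ ψ hφ hAsum hBsum ρ hρ hρtr lam hlam
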